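/- arXiv:2008.10764 — 6 statements merged into one kernel-verified Lean document; each statement's English description precedes it below -/
import Mathlib

section
/- (Discrete-time version of Theorem 1 of the paper.) Let X be a nonempty finite type, T a stochastic matrix on X, and φ an operator on probability distributions on X that satisfies the Pythagorean identity, satisfies φ(T r) = T(φ r) for every distribution r, and is such that every distribution r is absolutely continuous with respect to φ r. Let π be a distribution in the image of φ with T π = π. Then for every distribution p: D(p‖π) − D(T p‖π) = [D(p‖φ p) − D(T p‖φ(T p))] + [D(φ p‖π) − D(T(φ p)‖π)], and moreover D(p‖φ p) − D(T p‖φ(T p)) ≥ 0. -/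
open Finset

/-- A probability distribution on a finite type. -/
def IsDist {X : Type*} [Fintype X] (p : X → ℝ) : Prop :=
  (∀ x, 0 ≤ p x) ∧ ∑ x, p x = 1

/-- Kullback–Leibler divergence (terms with `p x = 0` contribute `0`,
since `0 * Real.log _ = 0`). -/
noncomputable def KL {X : Type*} [Fintype X] (p q : X → ℝ) : ℝ :=
  ∑ x, p x * Real.log (p x / q x)

/-- Absolute continuity of `p` with respect to `q`. -/
def AbsCont {X : Type*} [Fintype X] (p q : X → ℝ) : Prop :=
  ∀ x, q x = 0 → p x = 0

/-- A (column-)stochastic matrix on a finite type. -/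
def IsStochastic {X : Type*} [Fintype X] (T : X → X → ℝ) : Prop :=
  (∀ x x', 0 ≤ T x x') ∧ ∀ x', ∑ x, T x x' = 1

/-- Action of a stochastic matrix on a distribution. -/
noncomputable def mapply {X : Type*} [Fintype X] (T : X → X → ℝ) (p : X → ℝ) : X → ℝ :=
  fun x => ∑ x', T x x' * p x'

/-- `φ` satisfies the Pythagorean identity. -/
def Pythagorean {X : Type*} [Fintype X] (φ : (X → ℝ) → (X → ℝ)) : Prop :=
  ∀ p q : X → ℝ, IsDist p → IsDist q → (∃ r, IsDist r ∧ φ r = q) →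
    KL p q = KL p (φ p) + KL (φ p) q

lemma mapply_isDist {X : Type*} [Fintype X] {T : X → X → ℝ} (hT : IsStochastic T)
    {p : X → ℝ} (hp : IsDist p) : IsDist (mapply T p) := by
  constructor
  · intro x
    exact Finset.sum_nonneg fun x' _ => mul_nonneg (hT.1 x x') (hp.1 x')
  · rw [show ∑ x, mapply T p x = ∑ x', (∑ x, T x x') * p x' by
      simp only [mapply, Finset.sum_mul]; exact Finset.sum_comm]
    simp [hT.2, hp.2]

lemma mapply_zero {X : Type*} [Fintype X] {T : X → X → ℝ} (hT : IsStochastic T)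
    {p q : X → ℝ} (hp : ∀ x, 0 ≤ p x) (hq : ∀ x, 0 ≤ q x)
    (hac : ∀ x, q x = 0 → p x = 0) {x : X} (h : mapply T q x = 0) :
    mapply T p x = 0 := by
  have h' := (Finset.sum_eq_zero_iff_of_nonneg
    (fun x' _ => mul_nonneg (hT.1 x x') (hq x'))).1 h
  apply Finset.sum_eq_zero
  intro x' _
  rcases mul_eq_zero.1 (h' x' (Finset.mem_univ x')) with h0 | h0
  · simp [h0]
  · simp [hp, hac x' h0]

/-- Data processing inequality for KL divergence under a stochastic matrix. -/
lemma dpi {X : Type*} [Fintype X] {T : X → X → ℝ} (hT : IsStochastic T)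
    {p q : X → ℝ} (hp : ∀ x, 0 ≤ p x) (hq : ∀ x, 0 ≤ q x)
    (hac : ∀ x, q x = 0 → p x = 0) :
    KL (mapply T p) (mapply T q) ≤ KL p q := by
  have h1 : KL p q = ∑ x, ∑ x', T x x' * p x' * Real.log (p x' / q x') := by
    rw [show (∑ x, ∑ x', T x x' * p x' * Real.log (p x' / q x'))
        = ∑ x', ∑ x, T x x' * p x' * Real.log (p x' / q x') from Finset.sum_comm]
    unfold KL
    apply Finset.sum_congr rfl
    intro x' _
    calc p x' * Real.log (p x' / q x')
        = (∑ x, T x x') * (p x' * Real.log (p x' / q x')) := by rw [hT.2 x', one_mul]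
      _ = ∑ x, T x x' * p x' * Real.log (p x' / q x') := by
          rw [Finset.sum_mul]; simp [mul_assoc]
  have h2 : KL (mapply T p) (mapply T q)
      = ∑ x, ∑ x', T x x' * p x' * Real.log (mapply T p x / mapply T q x) := by
    unfold KL
    apply Finset.sum_congr rfl
    intro x _
    rw [show mapply T p x * Real.log (mapply T p x / mapply T q x)
        = (∑ x', T x x' * p x') * Real.log (mapply T p x / mapply T q x) from rfl,
      Finset.sum_mul]
  rw [← sub_nonneg, h1, h2, ← Finset.sum_sub_distrib]
  apply Finset.sum_nonneg
  intro x _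
  rw [← Finset.sum_sub_distrib]
  set A := mapply T p x with hA
  set B := mapply T q x with hB
  have hAnn : 0 ≤ A := Finset.sum_nonneg fun x' _ => mul_nonneg (hT.1 x x') (hp x')
  have hBnn : 0 ≤ B := Finset.sum_nonneg fun x' _ => mul_nonneg (hT.1 x x') (hq x')
  set b : X → ℝ := fun x' => T x x' * q x' * (A / B) with hbdef
  have hbnn : ∀ x', 0 ≤ b x' := fun x' =>
    mul_nonneg (mul_nonneg (hT.1 x x') (hq x')) (div_nonneg hAnn hBnn)
  have hsum : ∑ x', T x x' * p x' = ∑ x', b x' := by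
    have hs : ∑ x', b x' = B * (A / B) := by
      rw [hbdef, hB, mapply, ← Finset.sum_mul]
    rw [hs]
    by_cases hB0 : B = 0
    · rw [hB0, zero_mul]
      exact mapply_zero hT hp hq hac hB0
    · rw [mul_comm, div_mul_cancel₀ _ hB0]; rfl
  calc (0:ℝ) = ∑ x', (T x x' * p x' - b x') := by
        rw [Finset.sum_sub_distrib, hsum, sub_self]
    _ ≤ ∑ x', (T x x' * p x' * Real.log (p x' / q x')
          - T x x' * p x' * Real.log (A / B)) := by
        apply Finset.sum_le_sum
        intro x' _
        rcases (mul_nonneg (hT.1 x x') (hp x')).eq_or_lt with ha | ha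
        · rw [← ha]
          simp only [zero_mul, zero_sub, sub_zero]
          linarith [hbnn x']
        · have hT0 : 0 < T x x' :=
            (hT.1 x x').lt_of_ne (Ne.symm (left_ne_zero_of_mul ha.ne'))
          have hp0 : 0 < p x' :=
            (hp x').lt_of_ne (Ne.symm (right_ne_zero_of_mul ha.ne'))
          have hq0 : 0 < q x' :=
            (hq x').lt_of_ne (fun h => hp0.ne' (hac x' h.symm))
          have hApos : 0 < A :=
            lt_of_lt_of_le ha (Finset.single_le_sum
              (fun i _ => mul_nonneg (hT.1 x i) (hp i)) (Finset.mem_univ x'))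
          have hBpos : 0 < B :=
            lt_of_lt_of_le (mul_pos hT0 hq0) (Finset.single_le_sum
              (fun i _ => mul_nonneg (hT.1 x i) (hq i)) (Finset.mem_univ x'))
          have hbpos : 0 < b x' := by
            rw [hbdef]
            exact mul_pos (mul_pos hT0 hq0) (div_pos hApos hBpos)
          have hlog : Real.log (p x' / q x') - Real.log (A / B)
              = Real.log ((T x x' * p x') / b x') := by
            rw [Real.log_div ha.ne' hbpos.ne', hbdef,
              Real.log_mul (mul_pos hT0 hq0).ne' (div_pos hApos hBpos).ne',
              Real.log_mul hT0.ne' hq0.ne', Real.log_mul hT0.ne' hp0.ne',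
              Real.log_div hApos.ne' hBpos.ne', Real.log_div hp0.ne' hq0.ne']
            ring
          rw [← mul_sub, hlog,
            Real.log_div ha.ne' hbpos.ne']
          have hkey := Real.log_le_sub_one_of_pos (div_pos hbpos ha)
          rw [Real.log_div hbpos.ne' ha.ne'] at hkey
          have h3 := mul_le_mul_of_nonneg_left hkey ha.le
          have h4 : (T x x' * p x') * (b x' / (T x x' * p x') - 1)
              = b x' - T x x' * p x' := by
            field_simp
          nlinarith
    _ = ∑ x', (T x x' * p x' * Real.log (p x' / q x')
          - T x x' * p x' * Real.log (mapply T p x / mapply T q x)) := by rfl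

/-- (Discrete-time version of Theorem 1.) Decomposition of the one-step
entropy production into the contraction of `D(p‖φ p)` (which is non-negative) plus the
entropy production of the projected distribution `φ p`. -/
theorem stmt3 {X : Type*} [Fintype X] [Nonempty X]
    (T : X → X → ℝ) (hT : IsStochastic T)
    (φ : (X → ℝ) → (X → ℝ))
    (hφ : ∀ p, IsDist p → IsDist (φ p))
    (hpyth : Pythagorean φ)
    (hcomm : ∀ r, IsDist r → φ (mapply T r) = mapply T (φ r))
    (hac : ∀ r, IsDist r → AbsCont r (φ r))
    (π : X → ℝ) (hπ : IsDist π) (hπim : ∃ r, IsDist r ∧ φ r = π)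
    (hπstat : mapply T π = π)
    (p : X → ℝ) (hp : IsDist p) :
    KL p π - KL (mapply T p) π =
      (KL p (φ p) - KL (mapply T p) (φ (mapply T p)))
        + (KL (φ p) π - KL (mapply T (φ p)) π)
    ∧ 0 ≤ KL p (φ p) - KL (mapply T p) (φ (mapply T p)) := by
  have hTp : IsDist (mapply T p) := mapply_isDist hT hp
  have he1 : KL p π = KL p (φ p) + KL (φ p) π := hpyth p π hp hπ hπim
  have he2 : KL (mapply T p) π
      = KL (mapply T p) (φ (mapply T p)) + KL (φ (mapply T p)) π :=
    hpyth (mapply T p) π hTp hπ hπim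
  have hc : φ (mapply T p) = mapply T (φ p) := hcomm p hp
  have hdpi : KL (mapply T p) (mapply T (φ p)) ≤ KL p (φ p) :=
    dpi hT hp.1 ((hφ p hp).1) (hac p hp)
  constructor
  · rw [he1, he2, hc]; ring
  · rw [hc]; linarith
end

section
/- (Decomposition of free energy into accessible and inaccessible parts.) Let X be a nonempty finite type, β > 0, E : X → ℝ an energy function with Boltzmann distribution π_E, and φ an operator on probability distributions on X satisfying the Pythagorean identity, such that π_E lies in the image of φ. Then for every probability distribution p on X: F(p, E) = F(φ p, E) + β⁻¹ * D(p‖φ p). In particular, if additionally p is absolutely continuous with respect to φ p, then F(φ p, E) ≤ F(p, E). -/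
open Finset

/-- Shannon entropy (terms with `p x = 0` contribute `0`). -/
noncomputable def ShEnt {X : Type*} [Fintype X] (p : X → ℝ) : ℝ :=
  -∑ x, p x * Real.log (p x)

/-- Nonequilibrium free energy. -/
noncomputable def FreeEnergy {X : Type*} [Fintype X] (β : ℝ) (p E : X → ℝ) : ℝ :=
  (∑ x, p x * E x) - β⁻¹ * ShEnt p

/-- The Boltzmann distribution of energy function `E` at inverse temperature `β`. -/
noncomputable def boltzmann {X : Type*} [Fintype X] (β : ℝ) (E : X → ℝ) : X → ℝ :=
  fun x => Real.exp (-β * E x) / ∑ y, Real.exp (-β * E y)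

/-- Decomposition of free energy into accessible and inaccessible parts:
`F(p, E) = F(φ p, E) + β⁻¹ D(p‖φ p)`, and `F(φ p, E) ≤ F(p, E)` when `p ≪ φ p`. -/
theorem stmt6 {X : Type*} [Fintype X] [Nonempty X]
    (β : ℝ) (hβ : 0 < β) (E : X → ℝ)
    (φ : (X → ℝ) → (X → ℝ))
    (hφ : ∀ p, IsDist p → IsDist (φ p))
    (hpyth : Pythagorean φ)
    (hπim : ∃ r, IsDist r ∧ φ r = boltzmann β E)
    (p : X → ℝ) (hp : IsDist p) :
    FreeEnergy β p E = FreeEnergy β (φ p) E + β⁻¹ * KL p (φ p)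
    ∧ (AbsCont p (φ p) → FreeEnergy β (φ p) E ≤ FreeEnergy β p E) := by
  have hZ : 0 < ∑ y, Real.exp (-β * E y) :=
    Finset.sum_pos (fun y _ => Real.exp_pos _) Finset.univ_nonempty
  set Z := ∑ y, Real.exp (-β * E y) with hZdef
  have hπpos : ∀ x, 0 < boltzmann β E x := fun x => div_pos (Real.exp_pos _) hZ
  have hπdist : IsDist (boltzmann β E) := by
    refine ⟨fun x => (hπpos x).le, ?_⟩
    simp only [boltzmann, ← Finset.sum_div, ← hZdef]
    exact div_self hZ.ne'
  have key : ∀ q : X → ℝ, IsDist q →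
      KL q (boltzmann β E) = β * FreeEnergy β q E + Real.log Z := by
    intro q hq
    have hterm : ∀ x, q x * Real.log (q x / boltzmann β E x)
        = q x * Real.log (q x) + β * (q x * E x) + q x * Real.log Z := by
      intro x
      rcases eq_or_lt_of_le (hq.1 x) with h | h
      · simp [← h]
      · rw [Real.log_div h.ne' (hπpos x).ne']
        have hl : Real.log (boltzmann β E x) = -β * E x - Real.log Z := by
          rw [boltzmann, Real.log_div (Real.exp_pos _).ne' hZ.ne', Real.log_exp, hZdef]
        rw [hl]; ring
    rw [KL]
    simp_rw [hterm]
    rw [Finset.sum_add_distrib, Finset.sum_add_distrib, ← Finset.mul_sum,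
      ← Finset.sum_mul, hq.2, one_mul, FreeEnergy, ShEnt]
    field_simp
    ring
  have hφp := hφ p hp
  have hpyt := hpyth p (boltzmann β E) hp hπdist hπim
  rw [key p hp, key (φ p) hφp] at hpyt
  have hmain : FreeEnergy β p E = FreeEnergy β (φ p) E + β⁻¹ * KL p (φ p) := by
    have hβ' : β ≠ 0 := hβ.ne'
    field_simp at hpyt ⊢
    linarith
  refine ⟨hmain, fun hac => ?_⟩
  have hKL : 0 ≤ KL p (φ p) := by
    have hterm : ∀ x ∈ Finset.univ, p x - φ p x ≤ p x * Real.log (p x / φ p x) := by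
      intro x _
      rcases eq_or_lt_of_le (hp.1 x) with h | h
      · simp [← h, hφp.1 x]
      · have hq : 0 < φ p x :=
          lt_of_le_of_ne (hφp.1 x) (fun he => h.ne' (hac x he.symm) |>.elim)
        have hle := Real.log_le_sub_one_of_pos (div_pos hq h)
        have hlog : Real.log (p x / φ p x) = -Real.log (φ p x / p x) := by
          rw [Real.log_div h.ne' hq.ne', Real.log_div hq.ne' h.ne']; ring
        rw [hlog]
        nlinarith [mul_le_mul_of_nonneg_left hle h.le, mul_div_cancel₀ (φ p x) h.ne']
    have := Finset.sum_le_sum hterm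
    rw [Finset.sum_sub_distrib, hp.2, hφp.2] at this
    simpa [KL] using this
  have := mul_nonneg (inv_pos.mpr hβ).le hKL
  linarith
end

section
/- (Pythagorean theorem for the twirling operator.) Let G be a finite group acting on a nonempty finite type X, and let φ_G be the twirling operator. Then for all probability distributions p and q on X such that p is absolutely continuous with respect to φ_G q, one has D(p‖φ_G q) = D(p‖φ_G p) + D(φ_G p‖φ_G q). -/
open Finset

/-- The twirling operator for the action of a finite group `G` on `X`. -/
noncomputable def twirl (G : Type*) [Group G] [Fintype G] {X : Type*} [Fintype X]
    [MulAction G X] (p : X → ℝ) : X → ℝ :=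
  fun x => (1 / (Fintype.card G : ℝ)) * ∑ g : G, p (g • x)

lemma twirl_invariant (G : Type*) [Group G] [Fintype G] {X : Type*} [Fintype X]
    [MulAction G X] (p : X → ℝ) (g : G) (x : X) :
    twirl G p (g • x) = twirl G p x := by
  unfold twirl
  congr 1
  exact Fintype.sum_equiv (Equiv.mulRight g) _ _
    (fun h => by rw [Equiv.coe_mulRight, mul_smul])

/-- Pythagorean theorem for the twirling operator:
`D(p‖φ_G q) = D(p‖φ_G p) + D(φ_G p‖φ_G q)`. -/
theorem stmt7 (G : Type*) [Group G] [Fintype G] {X : Type*} [Fintype X] [Nonempty X]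
    [MulAction G X]
    (p q : X → ℝ) (hp : IsDist p) (hq : IsDist q)
    (hac : AbsCont p (twirl G q)) :
    KL p (twirl G q) = KL p (twirl G p) + KL (twirl G p) (twirl G q) := by
  classical
  set f : X → ℝ := fun x => Real.log (twirl G p x / twirl G q x) with hf
  have hfinv : ∀ (g : G) (x : X), f (g • x) = f x := by
    intro g x
    simp only [hf, twirl_invariant]
  -- pointwise splitting
  have h1 : ∀ x, p x * Real.log (p x / twirl G q x)
      = p x * Real.log (p x / twirl G p x) + p x * f x := by
    intro x
    by_cases hx : p x = 0
    · simp [hx]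
    · have hpx : 0 < p x := (hp.1 x).lt_of_ne (Ne.symm hx)
      have htp : 0 < twirl G p x := by
        unfold twirl
        have hsum : 0 < ∑ g : G, p (g • x) :=
          Finset.sum_pos' (fun g _ => hp.1 _)
            ⟨1, Finset.mem_univ 1, by simpa using hpx⟩
        have hc : (0:ℝ) < Fintype.card G := by
          exact_mod_cast Fintype.card_pos
        positivity
      have htq : 0 < twirl G q x := by
        have htq0 : 0 ≤ twirl G q x := by
          unfold twirl
          have hs : 0 ≤ ∑ g : G, q (g • x) :=
            Finset.sum_nonneg (fun g _ => hq.1 _)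
          positivity
        rcases htq0.eq_or_lt with h | h
        · exact absurd (hac x h.symm) hx
        · exact h
      simp only [hf]
      rw [Real.log_div hx htq.ne', Real.log_div hx htp.ne',
        Real.log_div htp.ne' htq.ne']
      ring
  -- invariance of the weighted sum
  have key : ∑ x, p x * f x = ∑ x, twirl G p x * f x := by
    have hg : ∀ g : G, ∑ x, p (g • x) * f x = ∑ x, p x * f x := by
      intro g
      calc ∑ x, p (g • x) * f x
          = ∑ x, p (g • ((g⁻¹ : G) • x)) * f ((g⁻¹ : G) • x) :=
            (Equiv.sum_comp (MulAction.toPerm (g⁻¹ : G))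
              (fun y => p (g • y) * f y)).symm
        _ = ∑ x, p x * f x := by
            refine Finset.sum_congr rfl (fun x _ => ?_)
            rw [smul_inv_smul, hfinv]
    have hc : (Fintype.card G : ℝ) ≠ 0 := by
      exact_mod_cast Fintype.card_pos.ne'
    refine Eq.symm ?_
    calc ∑ x, twirl G p x * f x
        = (1 / (Fintype.card G : ℝ)) * ∑ g : G, ∑ x, p (g • x) * f x := by
          rw [Finset.sum_comm]
          rw [Finset.mul_sum]
          refine Finset.sum_congr rfl (fun x _ => ?_)
          unfold twirl
          rw [mul_assoc, Finset.sum_mul]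
      _ = (1 / (Fintype.card G : ℝ)) * ∑ _g : G, ∑ x, p x * f x := by
          rw [Finset.sum_congr rfl (fun g _ => hg g)]
      _ = ∑ x, p x * f x := by
          rw [Finset.sum_const, Finset.card_univ, nsmul_eq_mul]
          field_simp
  have hsplit : KL p (twirl G q) = KL p (twirl G p) + ∑ x, p x * f x := by
    unfold KL
    rw [← Finset.sum_add_distrib]
    exact Finset.sum_congr rfl (fun x _ => h1 x)
  rw [hsplit, key]
  rfl
end

section
/- (Monotonicity of asymmetry under symmetric dynamics.) Let G be a finite group acting on a nonempty finite type X, let φ_G be the twirling operator, and let T be a stochastic matrix on X satisfying T (g • x) (g • x') = T x x' for all g ∈ G and x, x' ∈ X. Then for every probability distribution p on X, D(T p‖φ_G (T p)) ≤ D(p‖φ_G p). -/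
open Finset

/-- The log-sum inequality. -/
lemma log_sum_ineq {ι : Type*} [Fintype ι] (a b : ι → ℝ)
    (ha : ∀ i, 0 ≤ a i) (hb : ∀ i, 0 ≤ b i) (hab : ∀ i, b i = 0 → a i = 0) :
    (∑ i, a i) * Real.log ((∑ i, a i) / (∑ i, b i)) ≤ ∑ i, a i * Real.log (a i / b i) := by
  set A := ∑ i, a i with hA
  set B := ∑ i, b i with hB
  by_cases hB0 : B = 0
  · have hb0 : ∀ i, b i = 0 := fun i =>
      (Finset.sum_eq_zero_iff_of_nonneg (fun i _ => hb i)).mp hB0 i (mem_univ i)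
    have ha0 : ∀ i, a i = 0 := fun i => hab i (hb0 i)
    have : A = 0 := by rw [hA]; exact Finset.sum_eq_zero fun i _ => ha0 i
    simp [this, ha0]
  · have hBpos : 0 < B := lt_of_le_of_ne (Finset.sum_nonneg fun i _ => hb i) (Ne.symm hB0)
    have hjensen := Real.convexOn_mul_log.map_sum_le (t := Finset.univ)
      (w := fun i => b i / B) (p := fun i => a i / b i)
      (fun i _ => div_nonneg (hb i) hBpos.le)
      (by rw [← Finset.sum_div, ← hB]; field_simp)
      (fun i _ => Set.mem_Ici.mpr (div_nonneg (ha i) (hb i)))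
    simp only [smul_eq_mul] at hjensen
    have hsum : ∑ i, (b i / B) * (a i / b i) = A / B := by
      have : ∀ i, (b i / B) * (a i / b i) = a i / B := by
        intro i
        by_cases h : b i = 0
        · simp [h, hab i h]
        · field_simp
      rw [Finset.sum_congr rfl fun i _ => this i, ← Finset.sum_div, hA]
    rw [hsum] at hjensen
    have key : ∑ i, (b i / B) * ((a i / b i) * Real.log (a i / b i))
        = (∑ i, a i * Real.log (a i / b i)) / B := by
      have : ∀ i, (b i / B) * ((a i / b i) * Real.log (a i / b i))
          = (a i * Real.log (a i / b i)) / B := by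
        intro i
        by_cases h : b i = 0
        · simp [h, hab i h]
        · field_simp
      rw [Finset.sum_congr rfl fun i _ => this i, ← Finset.sum_div]
    rw [key] at hjensen
    have := mul_le_mul_of_nonneg_left hjensen hBpos.le
    calc A * Real.log (A / B) = B * (A / B * Real.log (A / B)) := by field_simp
      _ ≤ B * ((∑ i, a i * Real.log (a i / b i)) / B) := this
      _ = ∑ i, a i * Real.log (a i / b i) := by field_simp

/-- Data processing inequality for `KL`. -/
lemma kl_dpi {X : Type*} [Fintype X] (T : X → X → ℝ) (hT : IsStochastic T)
    (p q : X → ℝ) (hp : ∀ x, 0 ≤ p x) (hq : ∀ x, 0 ≤ q x)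
    (hpq : ∀ x, q x = 0 → p x = 0) :
    KL (mapply T p) (mapply T q) ≤ KL p q := by
  unfold KL mapply
  have step1 : ∀ x : X,
      (∑ x', T x x' * p x') * Real.log ((∑ x', T x x' * p x') / (∑ x', T x x' * q x'))
      ≤ ∑ x', (T x x' * p x') * Real.log ((T x x' * p x') / (T x x' * q x')) := by
    intro x
    exact log_sum_ineq (fun x' => T x x' * p x') (fun x' => T x x' * q x')
      (fun x' => mul_nonneg (hT.1 x x') (hp x'))
      (fun x' => mul_nonneg (hT.1 x x') (hq x'))
      (fun x' h => by
        rcases mul_eq_zero.mp h with h | h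
        · simp only [h, zero_mul]
        · simp only [hpq x' h, mul_zero])
  calc ∑ x, (∑ x', T x x' * p x') * Real.log ((∑ x', T x x' * p x') / (∑ x', T x x' * q x'))
      ≤ ∑ x, ∑ x', (T x x' * p x') * Real.log ((T x x' * p x') / (T x x' * q x')) :=
        Finset.sum_le_sum fun x _ => step1 x
    _ = ∑ x', ∑ x, T x x' * (p x' * Real.log (p x' / q x')) := by
        rw [Finset.sum_comm]
        refine Finset.sum_congr rfl fun x' _ => Finset.sum_congr rfl fun x _ => ?_
        by_cases h : T x x' = 0
        · simp [h]
        · rw [mul_div_mul_left _ _ h]; ring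
    _ = ∑ x', p x' * Real.log (p x' / q x') := by
        refine Finset.sum_congr rfl fun x' _ => ?_
        rw [← Finset.sum_mul, hT.2 x', one_mul]

lemma twirl_mapply_comm (G : Type*) [Group G] [Fintype G] {X : Type*} [Fintype X]
    [MulAction G X] (T : X → X → ℝ)
    (hsymm : ∀ (g : G) (x x' : X), T (g • x) (g • x') = T x x')
    (p : X → ℝ) : twirl G (mapply T p) = mapply T (twirl G p) := by
  funext x
  unfold twirl mapply
  have h : ∀ g : G, ∑ x', T (g • x) x' * p x' = ∑ y, T x y * p (g • y) := by
    intro g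
    rw [← Equiv.sum_comp (MulAction.toPerm g) (fun x' => T (g • x) x' * p x')]
    refine Finset.sum_congr rfl fun y _ => ?_
    simp [MulAction.toPerm, hsymm g x y]
  rw [Finset.sum_congr rfl fun g _ => h g, Finset.sum_comm, Finset.mul_sum]
  refine Finset.sum_congr rfl fun y _ => ?_
  rw [← Finset.mul_sum]
  ring

/-- Monotonicity of asymmetry under symmetric dynamics:
`D(T p‖φ_G (T p)) ≤ D(p‖φ_G p)`. -/
theorem stmt11 (G : Type*) [Group G] [Fintype G] {X : Type*} [Fintype X] [Nonempty X]
    [MulAction G X]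
    (T : X → X → ℝ) (hT : IsStochastic T)
    (hsymm : ∀ (g : G) (x x' : X), T (g • x) (g • x') = T x x')
    (p : X → ℝ) (hp : IsDist p) :
    KL (mapply T p) (twirl G (mapply T p)) ≤ KL p (twirl G p) := by
  rw [twirl_mapply_comm G T hsymm p]
  refine kl_dpi T hT p (twirl G p) hp.1 ?_ ?_
  · intro x
    exact mul_nonneg (by positivity) (Finset.sum_nonneg fun g _ => hp.1 _)
  · intro x hx
    unfold twirl at hx
    have hcard : (0 : ℝ) < Fintype.card G := by positivity
    have hsum : ∑ g : G, p (g • x) = 0 := by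
      by_contra h
      apply h
      have := mul_eq_zero.mp hx
      rcases this with h1 | h1
      · exfalso
        rw [one_div] at h1
        exact (inv_ne_zero (ne_of_gt hcard)) h1
      · exact h1
    have := (Finset.sum_eq_zero_iff_of_nonneg (fun g _ => hp.1 (g • x))).mp hsum
      (1 : G) (mem_univ _)
    simpa using this
end

section
/- (Lumpability implies closed coarse-grained dynamics.) Let X and Z be nonempty finite types, ξ : X → Z a surjective coarse-graining map, W : X → X → ℝ a function of transition rates (W x x' is the rate from x to x', with W x x' ≥ 0 for x ≠ x'), and L̂ : Z → Z → ℝ coarse-grained rates (L̂ z z' is the rate from z' to z). Suppose the lumpability condition: for every x' ∈ X and every z ∈ Z with z ≠ ξ x', ∑_{x : ξ x = z} W x' x = L̂ z (ξ x'). Define the master-equation action on p : X → ℝ by (L p) x = ∑_{x'} (W x' x * p x' − W x x' * p x), and the coarse-grained distribution p_Z z = ∑_{x : ξ x = z} p x. Then for every p : X → ℝ and every z ∈ Z: ∑_{x : ξ x = z} (L p) x = ∑_{z' ≠ z} (L̂ z z' * p_Z z' − L̂ z' z * p_Z z). -/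
open Finset

/-- Coarse-graining of `p : X → ℝ` along `ξ : X → Z`:
`p_Z z = ∑_{x : ξ x = z} p x`. -/
noncomputable def coarse {X Z : Type*} [Fintype X] [DecidableEq Z] (ξ : X → Z)
    (p : X → ℝ) : Z → ℝ :=
  fun z => ∑ x ∈ Finset.univ.filter (fun x => ξ x = z), p x

/-- Master-equation action: `(L p) x = ∑_{x'} (W x' x * p x' − W x x' * p x)`. -/
noncomputable def masterEq {X : Type*} [Fintype X] (W : X → X → ℝ) (p : X → ℝ) : X → ℝ :=
  fun x => ∑ x', (W x' x * p x' - W x x' * p x)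

/-- Lumpability implies closed coarse-grained dynamics:
if for every `x'` and every macrostate `z ≠ ξ x'` the total rate
`∑_{x : ξ x = z} W x' x` equals `L̂ z (ξ x')`, then the coarse-graining of `L p`
is given by the coarse-grained master equation applied to `p_Z`. -/
theorem stmt16 {X Z : Type*} [Fintype X] [Fintype Z] [Nonempty X] [Nonempty Z]
    [DecidableEq Z]
    (ξ : X → Z) (hξ : Function.Surjective ξ)
    (W : X → X → ℝ) (hW : ∀ x x', x ≠ x' → 0 ≤ W x x')
    (Lhat : Z → Z → ℝ)
    (hlump : ∀ (x' : X) (z : Z), z ≠ ξ x' →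
      ∑ x ∈ Finset.univ.filter (fun x => ξ x = z), W x' x = Lhat z (ξ x'))
    (p : X → ℝ) (z : Z) :
    ∑ x ∈ Finset.univ.filter (fun x => ξ x = z), masterEq W p x
      = ∑ z' ∈ Finset.univ.filter (fun z' => z' ≠ z),
          (Lhat z z' * coarse ξ p z' - Lhat z' z * coarse ξ p z) := by
  classical
  simp only [masterEq, coarse]
  have fib : ∀ (f : X → ℝ), ∑ x', f x'
      = ∑ w, ∑ x' ∈ Finset.univ.filter (fun x => ξ x = w), f x' := fun f =>
    (Finset.sum_fiberwise_of_maps_to (fun x _ => Finset.mem_univ (ξ x)) f).symm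
  set T : Z → Finset X := fun w => Finset.univ.filter (fun x => ξ x = w) with hT
  have hmemT : ∀ {w : Z} {x : X}, x ∈ T w → ξ x = w := by
    intro w x hx; simpa [hT] using hx
  have hsplit : ∀ (g : Z → ℝ), ∑ w, g w = g z + ∑ w ∈ univ.filter (fun w => w ≠ z), g w := by
    intro g
    rw [← Finset.sum_filter_add_sum_filter_not univ (fun w => w = z) g]
    congr 1
    rw [Finset.filter_eq', if_pos (mem_univ z), Finset.sum_singleton]
  simp only [Finset.sum_sub_distrib]
  -- gain term
  have hA : ∑ x ∈ T z, ∑ x', W x' x * p x'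
      = (∑ x' ∈ T z, ∑ x ∈ T z, W x' x * p x')
        + ∑ w ∈ univ.filter (fun w => w ≠ z), Lhat z w * ∑ x' ∈ T w, p x' := by
    rw [Finset.sum_comm, fib (fun x' => ∑ x ∈ T z, W x' x * p x'), hsplit]
    congr 1
    refine Finset.sum_congr rfl (fun w hw => ?_)
    have hwz : w ≠ z := (Finset.mem_filter.mp hw).2
    rw [Finset.mul_sum]
    refine Finset.sum_congr rfl (fun x' hx' => ?_)
    have hz : z ≠ ξ x' := by rw [hmemT hx']; exact hwz.symm
    rw [← Finset.sum_mul, hlump x' z hz, hmemT hx']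
  -- loss term
  have hB : ∑ x ∈ T z, ∑ x', W x x' * p x
      = (∑ x ∈ T z, ∑ x' ∈ T z, W x x' * p x)
        + ∑ w ∈ univ.filter (fun w => w ≠ z), Lhat w z * ∑ x ∈ T z, p x := by
    have step : ∀ x ∈ T z, ∑ x', W x x' * p x
        = (∑ x' ∈ T z, W x x' * p x) + (∑ w ∈ univ.filter (fun w => w ≠ z), Lhat w z) * p x := by
      intro x hx
      rw [fib (fun x' => W x x' * p x), hsplit]
      congr 1
      rw [Finset.sum_mul]
      refine Finset.sum_congr rfl (fun w hw => ?_)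
      have hwz : w ≠ z := (Finset.mem_filter.mp hw).2
      have hz : w ≠ ξ x := by rw [hmemT hx]; exact hwz
      rw [← Finset.sum_mul, hlump x w hz, hmemT hx]
    rw [Finset.sum_congr rfl step, Finset.sum_add_distrib]
    congr 1
    rw [← Finset.mul_sum, Finset.sum_mul]
  rw [hA, hB, Finset.sum_comm (s := T z) (t := T z) (f := fun x' x => W x' x * p x')]
  simp only [hT]
  ring
end

section
/- (Lumpability intertwines the semigroup.) Let X and Z be nonempty finite types, ξ : X → Z, and let L : Matrix X X ℝ and L̂ : Matrix Z Z ℝ satisfy the intertwining condition: for every x' ∈ X and every z ∈ Z, ∑_{x : ξ x = z} L x x' = L̂ z (ξ x'). Define the aggregation operator K sending v : X → ℝ to K v : Z → ℝ with (K v) z = ∑_{x : ξ x = z} v x. Then for every τ ∈ ℝ and every v : X → ℝ, K (Matrix.exp (τ • L) *ᵥ v) = Matrix.exp (τ • L̂) *ᵥ (K v). -/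
open Finset

/-- The aggregation (coarse-graining) operator along `ξ : X → Z`:
`(K v) z = ∑_{x : ξ x = z} v x`. -/
noncomputable def aggreg {X Z : Type*} [Fintype X] [DecidableEq Z] (ξ : X → Z)
    (v : X → ℝ) : Z → ℝ :=
  fun z => ∑ x ∈ Finset.univ.filter (fun x => ξ x = z), v x

section aux
attribute [local instance] Matrix.linftyOpNormedRing Matrix.linftyOpNormedAlgebra

theorem intertwine_exp {X Z : Type*} [Fintype X] [Fintype Z] [Nonempty X] [Nonempty Z]
    [DecidableEq X] [DecidableEq Z]
    (P : Matrix Z X ℝ) (A : Matrix X X ℝ) (B : Matrix Z Z ℝ)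
    (h : P * A = B * P) :
    P * NormedSpace.exp A = NormedSpace.exp B * P := by
  have hpow : ∀ n : ℕ, P * A ^ n = B ^ n * P := by
    intro n
    induction n with
    | zero => simp
    | succ n ih =>
      rw [pow_succ, pow_succ, ← Matrix.mul_assoc, ih, Matrix.mul_assoc, h, ← Matrix.mul_assoc]
  have hA : Summable (fun n : ℕ => ((n.factorial : ℝ))⁻¹ • A ^ n) :=
    NormedSpace.expSeries_summable' A
  have hB : Summable (fun n : ℕ => ((n.factorial : ℝ))⁻¹ • B ^ n) :=
    NormedSpace.expSeries_summable' B
  let f : Matrix X X ℝ →ₗ[ℝ] Matrix Z X ℝ :=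
    { toFun := fun M => P * M
      map_add' := fun M N => Matrix.mul_add _ _ _
      map_smul' := fun c M => (Matrix.mul_smul _ _ _) }
  let g : Matrix Z Z ℝ →ₗ[ℝ] Matrix Z X ℝ :=
    { toFun := fun M => M * P
      map_add' := fun M N => Matrix.add_mul _ _ _
      map_smul' := fun c M => (Matrix.smul_mul _ _ _) }
  have hf : Continuous f := f.continuous_of_finiteDimensional
  have hg : Continuous g := g.continuous_of_finiteDimensional
  rw [NormedSpace.exp_eq_tsum (𝕂 := ℝ), NormedSpace.exp_eq_tsum (𝕂 := ℝ)]
  have h1 : P * ∑' n : ℕ, ((n.factorial : ℝ))⁻¹ • A ^ n = ∑' n : ℕ, ((n.factorial : ℝ))⁻¹ • (P * A ^ n) := by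
    simpa [f, Matrix.mul_smul] using (hA.hasSum.mapL ⟨f, hf⟩).tsum_eq.symm
  have h2 : (∑' n : ℕ, ((n.factorial : ℝ))⁻¹ • B ^ n) * P = ∑' n : ℕ, ((n.factorial : ℝ))⁻¹ • (B ^ n * P) := by
    simpa [g, Matrix.smul_mul] using (hB.hasSum.mapL ⟨g, hg⟩).tsum_eq.symm
  rw [h1, h2]
  exact tsum_congr fun n => by rw [hpow n]

end aux

/-- Lumpability intertwines the semigroup: if
`∑_{x : ξ x = z} L x x' = L̂ z (ξ x')` for all `x', z`, then for every `τ` and `v`,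
`K (exp (τ • L) *ᵥ v) = exp (τ • L̂) *ᵥ (K v)`, where `exp` is the matrix exponential. -/
theorem stmt17 {X Z : Type*} [Fintype X] [Fintype Z] [Nonempty X] [Nonempty Z]
    [DecidableEq X] [DecidableEq Z]
    (ξ : X → Z)
    (L : Matrix X X ℝ) (Lhat : Matrix Z Z ℝ)
    (hintertwine : ∀ (x' : X) (z : Z),
      ∑ x ∈ Finset.univ.filter (fun x => ξ x = z), L x x' = Lhat z (ξ x'))
    (τ : ℝ) (v : X → ℝ) :
    aggreg ξ ((NormedSpace.exp (τ • L)).mulVec v)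
      = (NormedSpace.exp (τ • Lhat)).mulVec (aggreg ξ v) := by
  set P : Matrix Z X ℝ := Matrix.of fun z x => if ξ x = z then 1 else 0 with hP
  have haggreg : ∀ w : X → ℝ, aggreg ξ w = P.mulVec w := by
    intro w
    funext z
    simp [aggreg, Matrix.mulVec, dotProduct, P, Finset.sum_filter, ite_mul]
  have hPL : P * (τ • L) = (τ • Lhat) * P := by
    ext z x'
    simp only [Matrix.mul_apply, Matrix.smul_apply, smul_eq_mul, P, Matrix.of_apply]
    simp only [ite_mul, one_mul, zero_mul, mul_ite, mul_zero]
    rw [← Finset.sum_filter, ← Finset.mul_sum, hintertwine]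
    simp [Finset.sum_ite_eq]
  have key := intertwine_exp P (τ • L) (τ • Lhat) hPL
  rw [haggreg, haggreg, Matrix.mulVec_mulVec, Matrix.mulVec_mulVec, key]
end
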